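/- Let e₁, e₂, e₃ be the standard basis of ℝ³ and b_ij = (e_i + e_j)/√2 for 1 ≤ i < j ≤ 3. Let F be the set of functions p from the unit sphere S² ⊂ ℝ³ to ℝ such that p is bounded below, p(−x) = p(x) for all x, and there is a constant δ with p(x) + p(y) + p(z) = δ for every orthonormal triple x, y, z ∈ S²; let F₀ = {p ∈ F : p(e_i) = 0 for i = 1,2,3 and p(b_ij) = 0 for 1 ≤ i < j ≤ 3}. Then the following are equivalent: (a) for every p ∈ F there is a self-adjoint (symmetric) operator W on ℝ³ such that p(x) = ⟨x, W x⟩ for all x ∈ S²; (b) every p ∈ F₀ vanishes identically. -/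

import Mathlib

/-!
For every linear map `W`, the quadratic form `x ↦ ⟪x, W x⟫` is a frame function, with
`δ = tr W`. A symmetric `W` is determined by the six values of its quadratic form at the `eᵢ`
and `b_ij`, and these six values can be prescribed arbitrarily. Hence under (a) a function in
`F₀` is the quadratic form of `W = 0`; conversely, under (b), subtracting from `p ∈ F` the
quadratic form that agrees with `p` at the six points leaves a function in `F₀`, hence `0`.
-/

noncomputable section

/-- The standard basis vectors of `ℝ³`. -/
def stdE (i : Fin 3) : EuclideanSpace ℝ (Fin 3) := EuclideanSpace.single i 1

/-- The vectors `b_ij = (e_i + e_j)/√2`. -/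
def stdB (i j : Fin 3) : EuclideanSpace ℝ (Fin 3) :=
  (Real.sqrt 2)⁻¹ • (stdE i + stdE j)

/-- A frame function on the unit sphere of `ℝ³`: bounded below, even, with constant
sum `δ` over every orthonormal triple. -/
def IsFrameFunction (p : EuclideanSpace ℝ (Fin 3) → ℝ) : Prop :=
  (∃ γ : ℝ, ∀ x : EuclideanSpace ℝ (Fin 3), ‖x‖ = 1 → γ ≤ p x) ∧
  (∀ x : EuclideanSpace ℝ (Fin 3), ‖x‖ = 1 → p (-x) = p x) ∧
  ∃ δ : ℝ, ∀ x y z : EuclideanSpace ℝ (Fin 3), ‖x‖ = 1 → ‖y‖ = 1 → ‖z‖ = 1 →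
    (inner ℝ x y : ℝ) = 0 → (inner ℝ x z : ℝ) = 0 → (inner ℝ y z : ℝ) = 0 →
    p x + p y + p z = δ

open scoped InnerProductSpace RealInnerProductSpace

local notation "ℝ³" => EuclideanSpace ℝ (Fin 3)

theorem LinearMap.trace_eq_sum_inner_of_orthonormal {𝕜 ι E : Type*} [RCLike 𝕜] [Fintype ι]
    [Nonempty ι] [NormedAddCommGroup E] [InnerProductSpace 𝕜 E] [FiniteDimensional 𝕜 E]
    (T : E →ₗ[𝕜] E) {v : ι → E} (hv : Orthonormal 𝕜 v)
    (hcard : Fintype.card ι = Module.finrank 𝕜 E) :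
    T.trace 𝕜 E = ∑ i, ⟪v i, T (v i)⟫_𝕜 := by
  let b := (basisOfOrthonormalOfCardEqFinrank hv hcard).toOrthonormalBasis (by simpa using hv)
  simpa [b] using T.trace_eq_sum_inner b

theorem inner_stdE_left (i : Fin 3) (v : ℝ³) : ⟪stdE i, v⟫ = v i := by
  simp [stdE, EuclideanSpace.inner_single_left]

theorem norm_stdE (i : Fin 3) : ‖stdE i‖ = 1 := by simp [stdE]

theorem norm_stdB {i j : Fin 3} (hij : i ≠ j) : ‖stdB i j‖ = 1 := by
  have h : ‖stdE i + stdE j‖ ^ 2 = 2 := by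
    rw [norm_add_sq_real, norm_stdE, norm_stdE, inner_stdE_left]
    simp [stdE, hij]
    norm_num
  rw [stdB, norm_smul, norm_inv, Real.norm_of_nonneg (Real.sqrt_nonneg 2),
    ← Real.sqrt_sq (norm_nonneg _), h, inv_mul_cancel₀ (by positivity)]

theorem IsFrameFunction.add {p q : ℝ³ → ℝ} (hp : IsFrameFunction p) (hq : IsFrameFunction q) :
    IsFrameFunction (p + q) := by
  obtain ⟨⟨γp, hγp⟩, hp_even, δp, hδp⟩ := hp
  obtain ⟨⟨γq, hγq⟩, hq_even, δq, hδq⟩ := hq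
  refine ⟨⟨γp + γq, fun x hx => add_le_add (hγp x hx) (hγq x hx)⟩,
    fun x hx => by simp [hp_even x hx, hq_even x hx], δp + δq,
    fun x y z hx hy hz hxy hxz hyz => ?_⟩
  simp only [Pi.add_apply]
  linarith [hδp x y z hx hy hz hxy hxz hyz, hδq x y z hx hy hz hxy hxz hyz]

theorem isFrameFunction_inner_map_self (W : ℝ³ →ₗ[ℝ] ℝ³) :
    IsFrameFunction fun x => ⟪x, W x⟫ := by
  refine ⟨⟨-‖W.toContinuousLinearMap‖, fun x hx => neg_le_of_abs_le ?_⟩, fun x _ => by simp,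
    W.trace ℝ ℝ³, fun x y z hx hy hz hxy hxz hyz => ?_⟩
  · calc |⟪x, W x⟫| ≤ ‖x‖ * ‖W.toContinuousLinearMap x‖ := abs_real_inner_le_norm _ _
      _ ≤ ‖W.toContinuousLinearMap‖ := by
        rw [hx, one_mul]; exact W.toContinuousLinearMap.unit_le_opNorm x hx.le
  · have hv : Orthonormal ℝ ![x, y, z] := by
      simp [Fin.forall_fin_succ, hx, hy, hz, hxy, hxz, hyz]
    simpa [Fin.sum_univ_three] using (W.trace_eq_sum_inner_of_orthonormal hv (by simp)).symm

theorem inner_stdE_toEuclideanLin_stdE (M : Matrix (Fin 3) (Fin 3) ℝ) (i j : Fin 3) :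
    ⟪stdE i, M.toEuclideanLin (stdE j)⟫ = M i j := by
  rw [inner_stdE_left]
  simp [stdE]

theorem LinearMap.IsSymmetric.inner_stdB_map_stdB {W : ℝ³ →ₗ[ℝ] ℝ³} (hW : W.IsSymmetric)
    (i j : Fin 3) :
    ⟪stdB i j, W (stdB i j)⟫ =
      (⟪stdE i, W (stdE i)⟫ + ⟪stdE j, W (stdE j)⟫) / 2 + ⟪stdE i, W (stdE j)⟫ := by
  have hsym : ⟪stdE j, W (stdE i)⟫ = ⟪stdE i, W (stdE j)⟫ := by
    rw [← hW, real_inner_comm]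
  have hsqrt : (Real.sqrt 2)⁻¹ * (Real.sqrt 2)⁻¹ = 1 / 2 := by
    rw [← mul_inv, Real.mul_self_sqrt zero_le_two, one_div]
  simp only [stdB, map_smul, map_add, real_inner_smul_left, real_inner_smul_right,
    inner_add_left, inner_add_right, hsym]
  linear_combination
    (⟪stdE i, W (stdE i)⟫ + 2 * ⟪stdE i, W (stdE j)⟫ + ⟪stdE j, W (stdE j)⟫) * hsqrt

theorem LinearMap.IsSymmetric.eq_zero_of_inner_map_self_stdE_stdB {W : ℝ³ →ₗ[ℝ] ℝ³}
    (hW : W.IsSymmetric) (hE : ∀ i, ⟪stdE i, W (stdE i)⟫ = 0)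
    (hB : ∀ i j, i < j → ⟪stdB i j, W (stdB i j)⟫ = 0) : W = 0 := by
  have hlt : ∀ i j, i < j → ⟪stdE i, W (stdE j)⟫ = 0 := fun i j hij => by
    simpa [hW.inner_stdB_map_stdB, hE] using hB i j hij
  have hentry : ∀ i j, ⟪stdE i, W (stdE j)⟫ = 0 := fun i j => by
    rcases lt_trichotomy i j with h | rfl | h
    · exact hlt i j h
    · exact hE i
    · rw [← hW, real_inner_comm]; exact hlt j i h
  refine (EuclideanSpace.basisFun (Fin 3) ℝ).toBasis.ext fun j => ?_
  ext i
  have h := hentry i j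
  rw [inner_stdE_left] at h
  simpa [stdE] using h

theorem exists_isSymmetric_inner_map_self_eq_on_stdE_stdB (f : ℝ³ → ℝ) :
    ∃ W : ℝ³ →ₗ[ℝ] ℝ³, W.IsSymmetric ∧ (∀ i, ⟪stdE i, W (stdE i)⟫ = f (stdE i)) ∧
      ∀ i j, i < j → ⟪stdB i j, W (stdB i j)⟫ = f (stdB i j) := by
  -- `M i j` solves `(M i i + M j j) / 2 + M i j = f (stdB i j)` with `M i i = f (stdE i)`.
  let M : Matrix (Fin 3) (Fin 3) ℝ := Matrix.of fun i j =>
    if i = j then f (stdE i) else f (stdB (min i j) (max i j)) - (f (stdE i) + f (stdE j)) / 2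
  have hW : M.toEuclideanLin.IsSymmetric := Matrix.isSymmetric_toEuclideanLin_iff.mpr <|
    Matrix.IsHermitian.ext fun i j => by
      by_cases h : i = j
      · simp [M, h]
      · simp [M, h, Ne.symm h, min_comm, max_comm, add_comm]
  refine ⟨M.toEuclideanLin, hW, fun i => by simp [inner_stdE_toEuclideanLin_stdE, M],
    fun i j hij => ?_⟩
  rw [hW.inner_stdB_map_stdB]
  simp only [inner_stdE_toEuclideanLin_stdE, M, Matrix.of_apply, ↓reduceIte, if_neg hij.ne,
    min_eq_left hij.le, max_eq_right hij.le]
  ring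

/-- Gleason's theorem for frame functions on `ℝ³` is equivalent to the statement that
every frame function vanishing on the `e_i` and the `b_ij` vanishes identically. -/
theorem gleason_iff_F0_vanishes :
    (∀ p : EuclideanSpace ℝ (Fin 3) → ℝ, IsFrameFunction p →
      ∃ W : EuclideanSpace ℝ (Fin 3) →ₗ[ℝ] EuclideanSpace ℝ (Fin 3), W.IsSymmetric ∧
        ∀ x : EuclideanSpace ℝ (Fin 3), ‖x‖ = 1 → p x = (inner ℝ x (W x) : ℝ)) ↔
    (∀ p : EuclideanSpace ℝ (Fin 3) → ℝ, IsFrameFunction p →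
      (∀ i : Fin 3, p (stdE i) = 0) → (∀ i j : Fin 3, i < j → p (stdB i j) = 0) →
      ∀ x : EuclideanSpace ℝ (Fin 3), ‖x‖ = 1 → p x = 0) := by
  constructor
  · intro hGleason p hp hE hB x hx
    obtain ⟨W, hW, hpW⟩ := hGleason p hp
    have hW0 : W = 0 := hW.eq_zero_of_inner_map_self_stdE_stdB
      (fun i => (hpW _ (norm_stdE i)).symm.trans (hE i))
      (fun i j hij => (hpW _ (norm_stdB hij.ne)).symm.trans (hB i j hij))
    simp [hpW x hx, hW0]
  · intro hF0 p hp
    obtain ⟨W, hW, hWE, hWB⟩ := exists_isSymmetric_inner_map_self_eq_on_stdE_stdB p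
    refine ⟨W, hW, fun x hx => ?_⟩
    have hdiff := hF0 _ (hp.add (isFrameFunction_inner_map_self (-W)))
      (fun i => by simp [hWE]) (fun i j hij => by simp [hWB i j hij]) x hx
    simpa [add_neg_eq_zero] using hdiff
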